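/- arXiv:1611.02455 — 5 statements merged into one kernel-verified Lean document; each statement's English description precedes it below -/
import Mathlib

section
/- Let d ≥ 4 and t be integers with 3 ≤ t ≤ d, and let d_1 ≥ d_2 ≥ ⋯ ≥ d_t ≥ 1 be integers with d_i ≤ d − t + 1 for all i and d_1 + ⋯ + d_t ≥ d. Then the inequality ((d_1 + ⋯ + d_t)! / (d_1! ⋯ d_t!)) · B_{d_1} ⋯ B_{d_t} < B_d holds, unless the tuple (t, d; d_1, …, d_t) is one of the following six: (3, 4; 2, 2, 2), (3, 5; 3, 3, 3), (3, 4; 2, 2, 1), (3, 5; 3, 3, 2), (3, 6; 4, 4, 4), (4, 5; 2, 2, 2, 2). -/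
open MeasureTheory Set
open scoped ENNReal

/-- The Sylvester sequence, 0-indexed: `sylvester 0 = 2 = s₁`,
`sylvester (n+1) = (sylvester n)^2 - sylvester n + 1`, so that `sₙ = sylvester (n-1)`. -/
def sylvester : ℕ → ℕ
  | 0 => 2
  | n + 1 => (sylvester n) ^ 2 - sylvester n + 1

/-- A point of `ℝ^d` is a lattice point if all its coordinates are integers. -/
def IsLatticePt {d : ℕ} (x : Fin d → ℝ) : Prop := ∀ i, ∃ z : ℤ, x i = (z : ℝ)

/-- A lattice polytope: the convex hull of finitely many lattice points. -/
def IsLatticePolytope {d : ℕ} (P : Set (Fin d → ℝ)) : Prop :=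
  ∃ V : Finset (Fin d → ℝ), (∀ v ∈ V, IsLatticePt v) ∧ P = convexHull ℝ (V : Set (Fin d → ℝ))

/-- A canonical Fano polytope in `ℝ^d`: a lattice polytope (automatically of full
dimension `d`) whose interior contains exactly one lattice point, namely the origin. -/
def IsCanonicalFano {d : ℕ} (P : Set (Fin d → ℝ)) : Prop :=
  IsLatticePolytope P ∧ {x ∈ interior P | IsLatticePt x} = {0}

/-- The dual (polar) of a set `P ⊆ ℝ^d`: all `y` with `⟨y, x⟩ ≥ -1` for every `x ∈ P`. -/
def polarDual {d : ℕ} (P : Set (Fin d → ℝ)) : Set (Fin d → ℝ) :=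
  {y | ∀ x ∈ P, -1 ≤ ∑ i, y i * x i}

/-- `B₂ = 9` and `Bₙ = 2(sₙ - 1)²` for `n ≠ 2`. -/
def Bconst (n : ℕ) : ℕ := if n = 2 then 9 else 2 * (sylvester (n - 1) - 1) ^ 2

/-! ### Auxiliary definitions and lemmas -/

/-- `Ysyl k = sylvester k - 1`. -/
def Ysyl (k : ℕ) : ℕ := sylvester k - 1

lemma sylvester_ge_two (k : ℕ) : 2 ≤ sylvester k := by
  induction k with
  | zero => decide
  | succ n ih =>
    have h : sylvester n * 2 ≤ sylvester n * sylvester n := Nat.mul_le_mul_left _ ih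
    show 2 ≤ sylvester n ^ 2 - sylvester n + 1
    rw [pow_two]
    omega

lemma Ysyl_succ (k : ℕ) : Ysyl (k + 1) = Ysyl k * (Ysyl k + 1) := by
  have h2 := sylvester_ge_two k
  show sylvester (k+1) - 1 = (sylvester k - 1) * (sylvester k - 1 + 1)
  have : sylvester (k+1) = sylvester k ^ 2 - sylvester k + 1 := rfl
  rw [this, pow_two]
  have h3 : sylvester k - 1 + 1 = sylvester k := by omega
  rw [h3, Nat.sub_mul, one_mul]
  omega

lemma Ysyl_pos (k : ℕ) : 1 ≤ Ysyl k := by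
  induction k with
  | zero => decide
  | succ n ih => rw [Ysyl_succ]; exact le_trans ih (Nat.le_mul_of_pos_right _ (by omega))

lemma Ysyl_le_succ (k : ℕ) : Ysyl k ≤ Ysyl (k + 1) := by
  rw [Ysyl_succ]; exact Nat.le_mul_of_pos_right _ (by omega)

lemma Ysyl_mono : Monotone Ysyl := monotone_nat_of_le_succ Ysyl_le_succ

lemma Ysyl_sq_le (k : ℕ) : Ysyl k ^ 2 ≤ Ysyl (k + 1) := by
  rw [Ysyl_succ, pow_two]
  exact Nat.mul_le_mul_left _ (by omega)

lemma Ysyl_pow_le (k j : ℕ) : Ysyl k ^ (2 ^ j) ≤ Ysyl (k + j) := by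
  induction j with
  | zero => simp
  | succ n ih =>
    have h1 : Ysyl k ^ (2 ^ (n+1)) = (Ysyl k ^ (2 ^ n)) ^ 2 := by
      rw [← pow_mul, pow_succ]
    rw [h1, ← add_assoc]
    exact le_trans (Nat.pow_le_pow_left ih 2) (Ysyl_sq_le _)

lemma Ysyl_lb (c : ℕ) (hc : 1 ≤ c) : 2 ^ (2 ^ (c - 1)) ≤ Ysyl c := by
  have h := Ysyl_pow_le 1 (c - 1)
  have h1 : Ysyl 1 = 2 := by decide
  rw [h1] at h
  have h2 : 1 + (c - 1) = c := by omega
  rwa [h2] at h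

lemma Ysyl_ge_two (c : ℕ) (hc : 1 ≤ c) : 2 ≤ Ysyl c := by
  have : Ysyl 1 ≤ Ysyl c := Ysyl_mono hc
  have h1 : Ysyl 1 = 2 := by decide
  omega

lemma Ysyl_ge_six (c : ℕ) (hc : 2 ≤ c) : 6 ≤ Ysyl c := by
  have : Ysyl 2 ≤ Ysyl c := Ysyl_mono hc
  have h1 : Ysyl 2 = 6 := by decide
  omega

lemma Ysyl_lin (k : ℕ) (hk : 2 ≤ k) : k + 2 ≤ Ysyl k := by
  induction k, hk using Nat.le_induction with
  | base => decide
  | succ n hn ih =>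
    rw [Ysyl_succ]
    have h1 : n + 3 ≤ Ysyl n + 1 := by omega
    calc n + 1 + 2 ≤ Ysyl n + 1 := by omega
    _ ≤ Ysyl n * (Ysyl n + 1) := Nat.le_mul_of_pos_left _ (Ysyl_pos n)

lemma Bconst_eq (k : ℕ) (h : k ≠ 2) : Bconst k = 2 * Ysyl (k - 1) ^ 2 := by
  rw [Bconst, if_neg h]; rfl

lemma Bconst_le (k : ℕ) : Bconst k ≤ 3 * Ysyl (k - 1) ^ 2 := by
  by_cases h : k = 2
  · subst h; decide
  · rw [Bconst_eq k h]; exact Nat.mul_le_mul_right _ (by omega)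

lemma two_mul_le_two_pow (t : ℕ) (ht : 1 ≤ t) : 2 * t ≤ 2 ^ t := by
  induction t, ht using Nat.le_induction with
  | base => decide
  | succ n hn ih =>
    have : 2 ≤ 2 ^ n := Nat.one_lt_two_pow (by omega)
    rw [pow_succ]
    omega

lemma choose_mul_pow_le (k m q : ℕ) : (k + m).choose k * q ^ m ≤ (q + 1) ^ (k + m) := by
  rw [add_pow q 1 (k + m)]
  have hm : m ∈ Finset.range (k + m + 1) := by
    simp only [Finset.mem_range]; omega
  have key : (k + m).choose k * q ^ m = q ^ m * 1 ^ (k + m - m) * ((k + m).choose m) := by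
    rw [one_pow, mul_one, Nat.choose_symm_add, mul_comm]
  calc (k + m).choose k * q ^ m
      = q ^ m * 1 ^ (k + m - m) * ((k + m).choose m) := key
    _ ≤ ∑ i ∈ Finset.range (k + m + 1), q ^ i * 1 ^ (k + m - i) * ((k + m).choose i) :=
        Finset.single_le_sum (f := fun i => q ^ i * 1 ^ (k + m - i) * ((k + m).choose i))
          (fun i _ => Nat.zero_le _) hm
    _ = (∑ i ∈ Finset.range (k + m + 1), q ^ i * 1 ^ (k + m - i) * ((k + m).choose i) : ℕ) := rfl

lemma multinomial_le_pow {α : Type*} (s : Finset α) (f : α → ℕ) :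
    Nat.multinomial s f ≤ s.card ^ (∑ i ∈ s, f i) := by
  induction s using Finset.cons_induction with
  | empty => simp
  | cons a s ha ih =>
    rw [Nat.multinomial_cons, Finset.sum_cons, Finset.card_cons]
    calc (f a + ∑ i ∈ s, f i).choose (f a) * Nat.multinomial s f
        ≤ (f a + ∑ i ∈ s, f i).choose (f a) * s.card ^ (∑ i ∈ s, f i) :=
          Nat.mul_le_mul_left _ ih
      _ ≤ (s.card + 1) ^ (f a + ∑ i ∈ s, f i) := choose_mul_pow_le _ _ _

/-! ### The key numeric inequalities -/

lemma Qgen (t c₀ E : ℕ) (ht : 1 ≤ t)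
    (hbase : t ^ (t * (c₀ + 1)) * 3 ^ t < 2 * Ysyl c₀ ^ E)
    (hstep : ∀ c, c₀ ≤ c → t ^ t ≤ Ysyl c ^ E) :
    ∀ c, c₀ ≤ c → t ^ (t * (c + 1)) * 3 ^ t < 2 * Ysyl c ^ E := by
  intro c hc
  induction c, hc using Nat.le_induction with
  | base => exact hbase
  | succ n hn ih =>
    have h1 : t ^ (t * (n + 1 + 1)) * 3 ^ t = (t ^ (t * (n + 1)) * 3 ^ t) * t ^ t := by
      rw [mul_add, pow_add, mul_one]; ring
    rw [h1]
    calc (t ^ (t * (n + 1)) * 3 ^ t) * t ^ t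
        < (2 * Ysyl n ^ E) * t ^ t := by
          exact Nat.mul_lt_mul_of_lt_of_le ih (le_refl _) (Nat.pow_pos (by omega))
      _ ≤ (2 * Ysyl n ^ E) * Ysyl n ^ E := Nat.mul_le_mul_left _ (hstep n hn)
      _ = 2 * (Ysyl n ^ 2) ^ E := by rw [mul_assoc, ← pow_add, ← pow_mul]; ring_nf
      _ ≤ 2 * Ysyl (n + 1) ^ E := Nat.mul_le_mul_left _ (Nat.pow_le_pow_left (Ysyl_sq_le n) E)

lemma Q3 : ∀ c, 5 ≤ c → 3 ^ (3 * (c + 1)) * 3 ^ 3 < 2 * Ysyl c ^ (2 ^ 3 - 2 * 3) := by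
  refine Qgen 3 5 _ (by omega) (by decide) (fun c hc => ?_)
  have h6 := Ysyl_ge_six c (by omega)
  calc (3:ℕ) ^ 3 ≤ 6 ^ (2 ^ 3 - 2 * 3) := by decide
    _ ≤ Ysyl c ^ (2 ^ 3 - 2 * 3) := Nat.pow_le_pow_left h6 _

lemma Q4 : ∀ c, 3 ≤ c → 4 ^ (4 * (c + 1)) * 3 ^ 4 < 2 * Ysyl c ^ (2 ^ 4 - 2 * 4) := by
  refine Qgen 4 3 _ (by omega) (by decide) (fun c hc => ?_)
  have h2 := Ysyl_ge_two c (by omega)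
  calc (4:ℕ) ^ 4 ≤ 2 ^ (2 ^ 4 - 2 * 4) := by decide
    _ ≤ Ysyl c ^ (2 ^ 4 - 2 * 4) := Nat.pow_le_pow_left h2 _

lemma Q5 : ∀ c, 2 ≤ c → 5 ^ (5 * (c + 1)) * 3 ^ 5 < 2 * Ysyl c ^ (2 ^ 5 - 2 * 5) := by
  refine Qgen 5 2 _ (by omega) (by decide) (fun c hc => ?_)
  have h2 := Ysyl_ge_two c (by omega)
  calc (5:ℕ) ^ 5 ≤ 2 ^ (2 ^ 5 - 2 * 5) := by decide
    _ ≤ Ysyl c ^ (2 ^ 5 - 2 * 5) := Nat.pow_le_pow_left h2 _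

lemma Q6 : ∀ c, 1 ≤ c → 6 ^ (6 * (c + 1)) * 3 ^ 6 < 2 * Ysyl c ^ (2 ^ 6 - 2 * 6) := by
  refine Qgen 6 1 _ (by omega) (by decide) (fun c hc => ?_)
  have h2 := Ysyl_ge_two c (by omega)
  calc (6:ℕ) ^ 6 ≤ 2 ^ (2 ^ 6 - 2 * 6) := by decide
    _ ≤ Ysyl c ^ (2 ^ 6 - 2 * 6) := Nat.pow_le_pow_left h2 _

lemma Tlem (t : ℕ) (ht : 7 ≤ t) : 2 * (t * t) + 4 * t ≤ 2 ^ t := by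
  induction t, ht using Nat.le_induction with
  | base => decide
  | succ n hn ih =>
    have key : 2 * ((n+1) * (n+1)) + 4 * (n+1) ≤ 2 * (2 * (n * n) + 4 * n) := by nlinarith
    rw [pow_succ]
    omega

lemma Slem (t c : ℕ) (ht : 7 ≤ t) (hc : 1 ≤ c) :
    t * t * (c + 1) + 2 * t ≤ 2 ^ (c - 1) * (2 ^ t - 2 * t) := by
  induction c, hc using Nat.le_induction with
  | base =>
    have h1 := Tlem t ht
    simp only [Nat.sub_self, pow_zero, one_mul]
    omega
  | succ n hn ih =>
    have h1 := Tlem t ht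
    have hA : t * t ≤ 2 ^ t - 2 * t := by omega
    have hX : 2 ^ t - 2 * t ≤ 2 ^ (n - 1) * (2 ^ t - 2 * t) :=
      Nat.le_mul_of_pos_left _ (Nat.pow_pos (by omega))
    have hre : t * t * (n + 1 + 1) = t * t * (n + 1) + t * t := by ring
    have hp : 2 ^ (n + 1 - 1) * (2 ^ t - 2 * t) = 2 * (2 ^ (n - 1) * (2 ^ t - 2 * t)) := by
      have h : n + 1 - 1 = (n - 1) + 1 := by omega
      rw [h, pow_succ]; ring
    rw [hre, hp]
    omega

lemma Rlem (t c : ℕ) (ht : 7 ≤ t) (hc : 1 ≤ c) :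
    t ^ (t * (c + 1)) * 3 ^ t < 2 * Ysyl c ^ (2 ^ t - 2 * t) := by
  have hS := Slem t c ht hc
  calc t ^ (t * (c + 1)) * 3 ^ t
      ≤ (2 ^ t) ^ (t * (c + 1)) * 3 ^ t :=
        Nat.mul_le_mul_right _ (Nat.pow_le_pow_left (Nat.lt_two_pow_self (n := t)).le _)
    _ < (2 ^ t) ^ (t * (c + 1)) * 4 ^ t := by
        have h4 : (3:ℕ) ^ t < 4 ^ t := Nat.pow_lt_pow_left (by omega) (by omega)
        exact Nat.mul_lt_mul_of_le_of_lt (le_refl _) h4 (Nat.pow_pos (Nat.pow_pos (by omega)))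
    _ = 2 ^ (t * (t * (c + 1)) + 2 * t) := by
        have h4 : (4:ℕ) ^ t = 2 ^ (2 * t) := by
          rw [show (4:ℕ) = 2 ^ 2 by norm_num, ← pow_mul]
        rw [h4, ← pow_mul, ← pow_add]
    _ ≤ 2 ^ (2 ^ (c - 1) * (2 ^ t - 2 * t)) := by
        apply Nat.pow_le_pow_right (by omega)
        have : t * (t * (c+1)) = t * t * (c+1) := by ring
        omega
    _ = (2 ^ (2 ^ (c - 1))) ^ (2 ^ t - 2 * t) := by rw [← pow_mul]
    _ ≤ Ysyl c ^ (2 ^ t - 2 * t) := Nat.pow_le_pow_left (Ysyl_lb c hc) _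
    _ ≤ 2 * Ysyl c ^ (2 ^ t - 2 * t) := Nat.le_mul_of_pos_left _ (by omega)

lemma tfac (d : ℕ) (hd : 4 ≤ d) : Nat.factorial d * 2 ^ d < 2 * Ysyl (d - 1) ^ 2 := by
  induction d, hd using Nat.le_induction with
  | base => decide
  | succ n hn ih =>
    have hY : n + 1 ≤ Ysyl (n - 1) := by
      have := Ysyl_lin (n - 1) (by omega)
      omega
    have h2 : 2 * (n + 1) ≤ Ysyl (n - 1) ^ 2 := by nlinarith [Ysyl_pos (n-1)]
    have hsq : Ysyl (n - 1) ^ 2 ≤ Ysyl n := by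
      have h := Ysyl_sq_le (n - 1)
      have he : n - 1 + 1 = n := by omega
      rwa [he] at h
    have hstep : Nat.factorial (n + 1) * 2 ^ (n + 1) = ((n + 1) * 2) * (Nat.factorial n * 2 ^ n) := by
      rw [Nat.factorial_succ, pow_succ]; ring
    rw [hstep]
    calc ((n + 1) * 2) * (Nat.factorial n * 2 ^ n)
        < ((n + 1) * 2) * (2 * Ysyl (n - 1) ^ 2) :=
          Nat.mul_lt_mul_of_le_of_lt (le_refl _) ih (by omega)
      _ = 2 * ((2 * (n + 1)) * Ysyl (n - 1) ^ 2) := by ring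
      _ ≤ 2 * (Ysyl (n - 1) ^ 2 * Ysyl (n - 1) ^ 2) :=
          Nat.mul_le_mul_left _ (Nat.mul_le_mul_right _ h2)
      _ = 2 * (Ysyl (n - 1) ^ 2) ^ 2 := by ring
      _ ≤ 2 * Ysyl ((n + 1) - 1) ^ 2 := by
          simp only [Nat.add_sub_cancel]
          exact Nat.mul_le_mul_left _ (Nat.pow_le_pow_left hsq 2)

/-! ### Part B: the asymptotic regime -/

lemma partB (d t : ℕ) (ht3 : 3 ≤ t) (htd : t < d) (dvec : Fin t → ℕ)
    (hub : ∀ i, dvec i ≤ d - t + 1)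
    (hQ : t ^ (t * (d - t + 1)) * 3 ^ t < 2 * Ysyl (d - t) ^ (2 ^ t - 2 * t)) :
    Nat.multinomial Finset.univ dvec * ∏ i, Bconst (dvec i) < Bconst d := by
  have ht0 : 0 < t := by omega
  set c := d - t with hc
  have hM : Nat.multinomial Finset.univ dvec ≤ t ^ (t * (c + 1)) := by
    calc Nat.multinomial Finset.univ dvec
        ≤ (Finset.univ : Finset (Fin t)).card ^ (∑ i, dvec i) := multinomial_le_pow _ _
      _ = t ^ (∑ i, dvec i) := by rw [Finset.card_univ, Fintype.card_fin]
      _ ≤ t ^ (t * (c + 1)) := by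
          apply Nat.pow_le_pow_right ht0
          calc ∑ i, dvec i ≤ ∑ _i : Fin t, (c + 1) := Finset.sum_le_sum (fun i _ => hub i)
            _ = t * (c + 1) := by rw [Finset.sum_const, Finset.card_univ, Fintype.card_fin, smul_eq_mul]
  have hP : ∏ i, Bconst (dvec i) ≤ (3 * Ysyl c ^ 2) ^ t := by
    calc ∏ i, Bconst (dvec i) ≤ ∏ _i : Fin t, (3 * Ysyl c ^ 2) := by
          apply Finset.prod_le_prod' (fun i _ => ?_)
          calc Bconst (dvec i) ≤ 3 * Ysyl (dvec i - 1) ^ 2 := Bconst_le _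
            _ ≤ 3 * Ysyl c ^ 2 := by
                have hle : dvec i - 1 ≤ c := by have := hub i; omega
                exact Nat.mul_le_mul_left _ (Nat.pow_le_pow_left (Ysyl_mono hle) _)
      _ = (3 * Ysyl c ^ 2) ^ t := by rw [Finset.prod_const, Finset.card_univ, Fintype.card_fin]
  have h2t : 2 * t ≤ 2 ^ t := two_mul_le_two_pow t (by omega)
  have key : t ^ (t * (c + 1)) * (3 * Ysyl c ^ 2) ^ t < 2 * Ysyl c ^ (2 ^ t) := by
    calc t ^ (t * (c + 1)) * (3 * Ysyl c ^ 2) ^ t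
        = (t ^ (t * (c + 1)) * 3 ^ t) * Ysyl c ^ (2 * t) := by
          rw [mul_pow, ← pow_mul]; ring
      _ < (2 * Ysyl c ^ (2 ^ t - 2 * t)) * Ysyl c ^ (2 * t) :=
          Nat.mul_lt_mul_of_lt_of_le hQ (le_refl _) (Nat.pow_pos (Ysyl_pos c))
      _ = 2 * Ysyl c ^ (2 ^ t) := by
          rw [mul_assoc, ← pow_add]
          congr 2
          omega
  have hfin : 2 * Ysyl c ^ (2 ^ t) ≤ Bconst d := by
    rw [Bconst_eq d (by omega)]
    have hexp : 2 ^ t = 2 ^ (t - 1) * 2 := by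
      rw [← pow_succ]
      congr 1
      omega
    have h1 : Ysyl c ^ (2 ^ t) = (Ysyl c ^ (2 ^ (t - 1))) ^ 2 := by
      rw [← pow_mul, hexp]
    rw [h1]
    have h2 : Ysyl c ^ (2 ^ (t - 1)) ≤ Ysyl (c + (t - 1)) := Ysyl_pow_le c (t - 1)
    have h3 : c + (t - 1) = d - 1 := by omega
    rw [h3] at h2
    exact Nat.mul_le_mul_left 2 (Nat.pow_le_pow_left h2 2)
  calc Nat.multinomial Finset.univ dvec * ∏ i, Bconst (dvec i)
      ≤ t ^ (t * (c + 1)) * (3 * Ysyl c ^ 2) ^ t := Nat.mul_le_mul hM hP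
    _ < 2 * Ysyl c ^ (2 ^ t) := key
    _ ≤ Bconst d := hfin

set_option maxRecDepth 40000

/-- For `d ≥ 4`, `3 ≤ t ≤ d` and `d₁ ≥ ⋯ ≥ d_t ≥ 1` with
`dᵢ ≤ d - t + 1` and `d₁ + ⋯ + d_t ≥ d`, the inequality
`((d₁ + ⋯ + d_t)! / (d₁! ⋯ d_t!)) · B_{d₁} ⋯ B_{d_t} < B_d` holds, except for the six
listed tuples `(t, d; d₁, …, d_t)`. -/
theorem multinomial_sylvester_ineq_t_ge_three (d t : ℕ) (hd : 4 ≤ d) (ht : 3 ≤ t)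
    (htd : t ≤ d) (dvec : Fin t → ℕ) (hmono : Antitone dvec) (h1 : ∀ i, 1 ≤ dvec i)
    (hub : ∀ i, dvec i ≤ d - t + 1) (hsum : d ≤ ∑ i, dvec i)
    (hexc : ¬ ((d = 4 ∧ List.ofFn dvec = [2, 2, 2]) ∨
      (d = 5 ∧ List.ofFn dvec = [3, 3, 3]) ∨
      (d = 4 ∧ List.ofFn dvec = [2, 2, 1]) ∨
      (d = 5 ∧ List.ofFn dvec = [3, 3, 2]) ∨
      (d = 6 ∧ List.ofFn dvec = [4, 4, 4]) ∨
      (d = 5 ∧ List.ofFn dvec = [2, 2, 2, 2]))) :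
    Nat.multinomial Finset.univ dvec * ∏ i, Bconst (dvec i) < Bconst d := by
  rcases eq_or_lt_of_le htd with rfl | hlt
  · -- t = d : all parts equal 1
    have hone : ∀ i, dvec i = 1 := fun i => le_antisymm (by have := hub i; omega) (h1 i)
    have hsum1 : ∑ i, dvec i = t := by
      rw [Finset.sum_congr rfl (fun i _ => hone i), Finset.sum_const, Finset.card_univ,
        Fintype.card_fin, smul_eq_mul, mul_one]
    have hM : Nat.multinomial Finset.univ dvec ≤ Nat.factorial t := by
      have h0 : Nat.multinomial Finset.univ dvec
          = (∑ i, dvec i).factorial / ∏ i, (dvec i).factorial := rfl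
      rw [h0, hsum1]
      exact Nat.div_le_self _ _
    have hPr : ∏ i, Bconst (dvec i) = 2 ^ t := by
      rw [Finset.prod_congr rfl (fun i _ => by rw [hone i]),
        Finset.prod_const, Finset.card_univ, Fintype.card_fin,
        show Bconst 1 = 2 from by decide]
    calc Nat.multinomial Finset.univ dvec * ∏ i, Bconst (dvec i)
        ≤ Nat.factorial t * 2 ^ t := by rw [hPr]; exact Nat.mul_le_mul_right _ hM
      _ < 2 * Ysyl (t - 1) ^ 2 := tfac t hd
      _ = Bconst t := (Bconst_eq t (by omega)).symm
  · have ht' : t = 3 ∨ t = 4 ∨ t = 5 ∨ t = 6 ∨ 7 ≤ t := by omega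
    rcases ht' with rfl | rfl | rfl | rfl | h7
    · -- t = 3
      by_cases hd8 : 8 ≤ d
      · exact partB d 3 (by omega) hlt dvec hub (Q3 (d - 3) (by omega))
      · obtain ⟨a, b, c3, rfl⟩ : ∃ a b c3, dvec = ![a, b, c3] :=
          ⟨_, _, _, by funext i; fin_cases i <;> rfl⟩
        have hba : b ≤ a := by simpa using hmono (show (0:Fin 3) ≤ 1 by decide)
        have hcb : c3 ≤ b := by simpa using hmono (show (1:Fin 3) ≤ 2 by decide)
        have h1c : 1 ≤ c3 := by simpa using h1 2
        have h1b : 1 ≤ b := h1c.trans hcb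
        have h1a : 1 ≤ a := h1b.trans hba
        have hua : a ≤ d - 3 + 1 := by simpa using hub 0
        simp only [Fin.sum_univ_three, Matrix.cons_val_zero, Matrix.cons_val_one,
          Matrix.head_cons, Matrix.cons_val_two, Matrix.tail_cons] at hsum
        interval_cases d <;> interval_cases a <;> interval_cases b <;> interval_cases c3 <;>
          first
          | exact absurd hsum (by decide)
          | decide
          | exact absurd (by decide) hexc
    · -- t = 4
      by_cases hd7 : 7 ≤ d
      · exact partB d 4 (by omega) hlt dvec hub (Q4 (d - 4) (by omega))
      · obtain ⟨a, b, c3, c4, rfl⟩ : ∃ a b c3 c4, dvec = ![a, b, c3, c4] :=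
          ⟨_, _, _, _, by funext i; fin_cases i <;> rfl⟩
        have hba : b ≤ a := by simpa using hmono (show (0:Fin 4) ≤ 1 by decide)
        have hcb : c3 ≤ b := by simpa using hmono (show (1:Fin 4) ≤ 2 by decide)
        have hdc : c4 ≤ c3 := by simpa using hmono (show (2:Fin 4) ≤ 3 by decide)
        have h1d : 1 ≤ c4 := by simpa using h1 3
        have h1c : 1 ≤ c3 := h1d.trans hdc
        have h1b : 1 ≤ b := h1c.trans hcb
        have h1a : 1 ≤ a := h1b.trans hba
        have hua : a ≤ d - 4 + 1 := by simpa using hub 0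
        simp only [Fin.sum_univ_four, Matrix.cons_val_zero, Matrix.cons_val_one,
          Matrix.head_cons, Matrix.cons_val_two, Matrix.tail_cons, Matrix.cons_val_three] at hsum
        interval_cases d <;> interval_cases a <;> interval_cases b <;> interval_cases c3 <;>
            interval_cases c4 <;>
          first
          | exact absurd hsum (by decide)
          | decide
          | exact absurd (by decide) hexc
    · -- t = 5
      by_cases hd7 : 7 ≤ d
      · exact partB d 5 (by omega) hlt dvec hub (Q5 (d - 5) (by omega))
      · obtain ⟨a, b, c3, c4, c5, rfl⟩ : ∃ a b c3 c4 c5, dvec = ![a, b, c3, c4, c5] :=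
          ⟨_, _, _, _, _, by funext i; fin_cases i <;> rfl⟩
        have hba : b ≤ a := by simpa using hmono (show (0:Fin 5) ≤ 1 by decide)
        have hcb : c3 ≤ b := by simpa using hmono (show (1:Fin 5) ≤ 2 by decide)
        have hdc : c4 ≤ c3 := by simpa using hmono (show (2:Fin 5) ≤ 3 by decide)
        have hed : c5 ≤ c4 := by simpa using hmono (show (3:Fin 5) ≤ 4 by decide)
        have h1e : 1 ≤ c5 := by simpa using h1 4
        have h1d : 1 ≤ c4 := h1e.trans hed
        have h1c : 1 ≤ c3 := h1d.trans hdc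
        have h1b : 1 ≤ b := h1c.trans hcb
        have h1a : 1 ≤ a := h1b.trans hba
        have hua : a ≤ d - 5 + 1 := by simpa using hub 0
        simp only [Fin.sum_univ_five, Matrix.cons_val_zero, Matrix.cons_val_one,
          Matrix.head_cons, Matrix.cons_val_two, Matrix.tail_cons, Matrix.cons_val_three,
          Matrix.cons_val_four] at hsum
        interval_cases d <;> interval_cases a <;> interval_cases b <;> interval_cases c3 <;>
            interval_cases c4 <;> interval_cases c5 <;>
          first
          | exact absurd hsum (by decide)
          | decide
          | exact absurd (by decide) hexc
    · -- t = 6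
      exact partB d 6 (by omega) hlt dvec hub (Q6 (d - 6) (by omega))
    · -- 7 ≤ t
      exact partB d t (by omega) hlt dvec hub (Rlem t (d - t) h7 (by omega))
end

section
/- Let d ≥ 4 be an integer and let d_1, d_2 be integers with 1 ≤ d_2 ≤ d_1 ≤ d − 1 and d_1 + d_2 ≥ d. Then the inequality ((d_1 + d_2)! / (d_1! d_2!)) · B_{d_1} · B_{d_2} < B_d holds, unless (d_1, d_2) = (d − 1, d − 1), or (d, d_1, d_2) = (4, 3, 2), or (d, d_1, d_2) = (5, 4, 3). -/
open MeasureTheory Set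
open scoped ENNReal

lemma syl_two_le_aux (n : ℕ) : 2 ≤ sylvester n := by
  induction n with
  | zero => decide
  | succ n ih =>
    show 2 ≤ sylvester n ^ 2 - sylvester n + 1
    have h : 2 * sylvester n ≤ sylvester n ^ 2 := by nlinarith
    omega

lemma syl_succ_eq (n : ℕ) :
    sylvester (n + 1) = sylvester n * (sylvester n - 1) + 1 := by
  show sylvester n ^ 2 - sylvester n + 1 = _
  rcases Nat.exists_eq_add_of_le (syl_two_le_aux n) with ⟨m, hm⟩
  rw [hm]
  have e1 : 2 + m - 1 = 1 + m := by omega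
  have h2 : (2 + m) ^ 2 = (2 + m) * (1 + m) + (2 + m) := by ring
  rw [e1, h2, Nat.add_sub_cancel]

lemma syl_two_le (n : ℕ) : 2 ≤ sylvester n := syl_two_le_aux n

lemma syl_lt_succ (n : ℕ) : sylvester n < sylvester (n + 1) := by
  rw [syl_succ_eq]
  have h := syl_two_le n
  have : 1 ≤ sylvester n - 1 := by omega
  nlinarith

lemma syl_mono : Monotone sylvester :=
  monotone_nat_of_le_succ fun n => (syl_lt_succ n).le

lemma syl_lb (k : ℕ) : 3 * 2 ^ (k + 5) ≤ sylvester (k + 4) := by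
  induction k with
  | zero => norm_num [sylvester]
  | succ k ih =>
    rw [show k + 1 + 4 = (k + 4) + 1 from rfl, syl_succ_eq]
    have h := syl_two_le (k + 4)
    have hp : (1:ℕ) ≤ 2 ^ (k + 5) := Nat.one_le_two_pow
    have h3 : 3 ≤ sylvester (k + 4) := le_trans (by nlinarith) ih
    have h1 : 2 ≤ sylvester (k + 4) - 1 := by omega
    calc 3 * 2 ^ (k + 1 + 5) = (3 * 2 ^ (k + 5)) * 2 := by ring
    _ ≤ sylvester (k + 4) * (sylvester (k + 4) - 1) := Nat.mul_le_mul ih h1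
    _ ≤ _ := Nat.le_succ _

lemma B_le (n : ℕ) : Bconst n ≤ 3 * (sylvester (n - 1) - 1) ^ 2 := by
  unfold Bconst
  split
  · subst ‹n = 2›; decide
  · nlinarith [sq_nonneg (sylvester (n-1) - 1)]

lemma choose_le_two_pow' (n k : ℕ) : n.choose k ≤ 2 ^ n := by
  rcases le_or_gt k n with h | h
  · calc n.choose k ≤ ∑ m ∈ Finset.range (n + 1), n.choose m :=
        Finset.single_le_sum (fun _ _ => Nat.zero_le _) (Finset.mem_range.mpr (by omega))
    _ = 2 ^ n := Nat.sum_range_choose n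
  · simp [Nat.choose_eq_zero_of_lt h]

lemma main_large (k d1 d2 : ℕ) (hd1 : d1 ≤ k + 6) (hd2 : d2 ≤ k + 5) :
    (d1 + d2).choose d1 * Bconst d1 * Bconst d2 < Bconst (k + 7) := by
  set u := sylvester (k + 5) with hu
  set v := sylvester (k + 4) with hv
  have h2u : 2 ≤ u := syl_two_le _
  have h2v : 2 ≤ v := syl_two_le _
  have hBd : Bconst (k + 7) = 2 * (u * (u - 1)) ^ 2 := by
    show (if k + 7 = 2 then 9 else 2 * (sylvester (k + 7 - 1) - 1) ^ 2) = _
    rw [if_neg (by omega)]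
    congr 2
    show sylvester ((k + 5) + 1) - 1 = _
    rw [syl_succ_eq]
    simp
    rfl
  have e5 : u = v * (v - 1) + 1 := syl_succ_eq (k + 4)
  have hB1 : Bconst d1 ≤ 3 * (u - 1) ^ 2 := by
    refine le_trans (B_le d1) (Nat.mul_le_mul_left 3 (Nat.pow_le_pow_left ?_ 2))
    exact Nat.sub_le_sub_right (syl_mono (show d1 - 1 ≤ k + 5 by omega)) 1
  have hB2 : Bconst d2 ≤ 3 * (v - 1) ^ 2 := by
    refine le_trans (B_le d2) (Nat.mul_le_mul_left 3 (Nat.pow_le_pow_left ?_ 2))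
    exact Nat.sub_le_sub_right (syl_mono (show d2 - 1 ≤ k + 4 by omega)) 1
  have hC : (d1 + d2).choose d1 ≤ 2 ^ (2 * k + 11) :=
    le_trans (choose_le_two_pow' _ _) (Nat.pow_le_pow_right (by norm_num) (by omega))
  have key : 9 * 2 ^ (2 * k + 11) ≤ 2 * v ^ 2 := by
    have hlb := syl_lb k
    calc 9 * 2 ^ (2 * k + 11) = 2 * (3 * 2 ^ (k + 5)) ^ 2 := by ring
    _ ≤ 2 * v ^ 2 := Nat.mul_le_mul_left 2 (Nat.pow_le_pow_left hlb 2)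
  calc (d1 + d2).choose d1 * Bconst d1 * Bconst d2
      ≤ 2 ^ (2 * k + 11) * (3 * (u - 1) ^ 2) * (3 * (v - 1) ^ 2) :=
        Nat.mul_le_mul (Nat.mul_le_mul hC hB1) hB2
    _ = (9 * 2 ^ (2 * k + 11)) * ((v - 1) ^ 2 * (u - 1) ^ 2) := by ring
    _ ≤ (2 * v ^ 2) * ((v - 1) ^ 2 * (u - 1) ^ 2) := Nat.mul_le_mul_right _ key
    _ = 2 * ((v * (v - 1)) ^ 2 * (u - 1) ^ 2) := by ring
    _ < 2 * (u ^ 2 * (u - 1) ^ 2) := by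
        have hlt : v * (v - 1) < u := by rw [e5]; exact Nat.lt_succ_self _
        have hsq : (v * (v - 1)) ^ 2 < u ^ 2 := Nat.pow_lt_pow_left hlt (by norm_num)
        have hpos : 0 < (u - 1) ^ 2 := by
          have : 1 ≤ u - 1 := by omega
          positivity
        have := Nat.mul_lt_mul_of_lt_of_le hsq (le_refl ((u - 1) ^ 2)) hpos
        omega
    _ = Bconst (k + 7) := by rw [hBd]; ring

/-- For `d ≥ 4` and `1 ≤ d₂ ≤ d₁ ≤ d - 1` with `d₁ + d₂ ≥ d`, the
inequality `((d₁ + d₂)! / (d₁! d₂!)) · B_{d₁} · B_{d₂} < B_d` holds, except for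
`(d₁, d₂) = (d-1, d-1)`, `(d, d₁, d₂) = (4, 3, 2)` and `(d, d₁, d₂) = (5, 4, 3)`. -/
theorem binomial_sylvester_ineq_t_eq_two (d d1 d2 : ℕ) (hd : 4 ≤ d) (h1 : 1 ≤ d2)
    (h21 : d2 ≤ d1) (h1d : d1 ≤ d - 1) (hsum : d ≤ d1 + d2)
    (hexc : ¬ ((d1 = d - 1 ∧ d2 = d - 1) ∨ (d = 4 ∧ d1 = 3 ∧ d2 = 2) ∨
      (d = 5 ∧ d1 = 4 ∧ d2 = 3))) :
    (d1 + d2).choose d1 * Bconst d1 * Bconst d2 < Bconst d := by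
  rcases Nat.lt_or_ge d 7 with hd7 | hd7
  · have hl1 : 1 ≤ d1 := h1.trans h21
    interval_cases d <;> [skip; skip; skip] <;>
      (interval_cases d1 <;> interval_cases d2 <;> first | omega | decide)
  · obtain ⟨k, rfl⟩ : ∃ k, d = k + 7 := ⟨d - 7, by omega⟩
    exact main_large k d1 d2 (by omega) (by omega)
end

section
/- Let S_1, …, S_t ⊂ ℝ^d be simplices, where S_i has dimension d_i and contains 0 in its relative interior, such that P := conv(S_1 ∪ ⋯ ∪ S_t) has dimension d and vert(S_i) ⊆ vert(P) for all i. Set r_1 = 0 and r_i = |vert(S_i) ∩ (vert(S_1) ∪ ⋯ ∪ vert(S_{i−1}))| for 2 ≤ i ≤ t, and assume r_i < d_i for all i and (d_1 − r_1) + ⋯ + (d_t − r_t) = d. Let W = span(S_1) × ⋯ × span(S_t) ⊆ (ℝ^d)^t, let φ : W → ℝ^d be the summation map (x_1, …, x_t) ↦ x_1 + ⋯ + x_t, and for a vertex v of S_i let e_{i,v} ∈ W denote the element with v in the i-th coordinate and 0 elsewhere. Then ker(φ) is the linear span of the set Ω = { e_{i_2, v} − e_{i_1, v} : 1 ≤ i_1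 < i_2 ≤ t, v ∈ vert(S_{i_1}) ∩ vert(S_{i_2}) }. -/
open MeasureTheory Set
open scoped ENNReal

/-- A simplex of dimension `k` in `ℝ^d`: the convex hull of `k + 1` affinely
independent points. -/
def IsSimplexOfDim {d : ℕ} (k : ℕ) (S : Set (Fin d → ℝ)) : Prop :=
  ∃ f : Fin (k + 1) → (Fin d → ℝ), AffineIndependent ℝ f ∧ S = convexHull ℝ (Set.range f)

/-- A canonical Fano polytope of dimension `k` with respect to the lattice
`lin(S) ∩ ℤ^d`: a lattice polytope of dimension `k` whose relative interior contains
exactly one lattice point, namely the origin. -/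
def IsCanonicalFanoOfDim {d : ℕ} (k : ℕ) (S : Set (Fin d → ℝ)) : Prop :=
  IsLatticePolytope S ∧ Module.finrank ℝ ↥(vectorSpan ℝ S) = k ∧
    {x ∈ intrinsicInterior ℝ S | IsLatticePt x} = {0}

/-- Minimality for canonical Fano polytopes of dimension `k` (w.r.t. `lin(S) ∩ ℤ^d`):
removing any vertex destroys the property. -/
def IsMinimalCanonicalFanoOfDim {d : ℕ} (k : ℕ) (S : Set (Fin d → ℝ)) : Prop :=
  IsCanonicalFanoOfDim k S ∧ ∀ v ∈ Set.extremePoints ℝ S,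
    ¬ IsCanonicalFanoOfDim k (convexHull ℝ ({x ∈ S | IsLatticePt x} \ {v}))

/-- A minimal (full-dimensional) canonical Fano polytope in `ℝ^d`: removing any vertex
destroys the property of being a `d`-dimensional canonical Fano polytope. -/
def IsMinimalCanonicalFano {d : ℕ} (P : Set (Fin d → ℝ)) : Prop :=
  IsCanonicalFano P ∧ ∀ v ∈ Set.extremePoints ℝ P,
    ¬ IsCanonicalFano (convexHull ℝ ({x ∈ P | IsLatticePt x} \ {v}))

noncomputable def piSubEquiv {ι : Type*} [Fintype ι] {M : ι → Type*} [∀ i, AddCommGroup (M i)]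
    [∀ i, Module ℝ (M i)] (p : ∀ i, Submodule ℝ (M i)) :
    (Submodule.pi Set.univ p) ≃ₗ[ℝ] (∀ i, p i) where
  toFun x := fun i => ⟨x.1 i, x.2 i trivial⟩
  map_add' _ _ := rfl
  map_smul' _ _ := rfl
  invFun y := ⟨fun i => y i, fun i _ => (y i).2⟩
  left_inv _ := rfl
  right_inv _ := rfl

lemma finrank_piSub {ι : Type*} [Fintype ι] {M : ι → Type*} [∀ i, AddCommGroup (M i)]
    [∀ i, Module ℝ (M i)] [∀ i, Module.Finite ℝ (M i)] (p : ∀ i, Submodule ℝ (M i)) :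
    Module.finrank ℝ (Submodule.pi Set.univ p) = ∑ i, Module.finrank ℝ (p i) := by
  rw [(piSubEquiv p).finrank_eq, Module.finrank_pi_fintype]


lemma mem_hull_weights {d n : ℕ} {f : Fin n → (Fin d → ℝ)} {x : Fin d → ℝ}
    (hx : x ∈ convexHull ℝ (Set.range f)) :
    ∃ w : Fin n → ℝ, (∀ k, 0 ≤ w k) ∧ ∑ k, w k = 1 ∧ ∑ k, w k • f k = x := by
  rw [convexHull_range_eq_exists_affineCombination] at hx
  obtain ⟨s, w, hw0, hw1, hwx⟩ := hx
  refine ⟨fun k => if k ∈ s then w k else 0,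
    fun k => by by_cases h : k ∈ s <;> simp [h, hw0 k] , ?_, ?_⟩
  · rw [Finset.sum_ite_mem, Finset.univ_inter, hw1]
  · rw [← hwx, s.affineCombination_eq_linear_combination _ _ hw1]
    simp only [ite_smul, zero_smul]
    rw [Finset.sum_ite_mem, Finset.univ_inter]

lemma exists_pos_combo {d n : ℕ} {f : Fin (n+1) → (Fin d → ℝ)}
    (h0 : (0 : Fin d → ℝ) ∈ intrinsicInterior ℝ (convexHull ℝ (Set.range f)))
    (k0 : Fin (n+1)) :
    ∃ lam : Fin (n+1) → ℝ, (∑ k, lam k = 1) ∧ (∑ k, lam k • f k = 0) ∧ 0 < lam k0 := by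
  set s := convexHull ℝ (Set.range f) with hs
  set Q := affineSpan ℝ s with hQ
  obtain ⟨y0, hy0int, hy0⟩ := h0
  have h0Q : (0 : Fin d → ℝ) ∈ Q := hy0 ▸ y0.2
  have hfk0Q : f k0 ∈ Q := subset_affineSpan ℝ s (subset_convexHull ℝ _ ⟨k0, rfl⟩)
  have hmem : ∀ δ : ℝ, (-δ) • f k0 ∈ Q := by
    intro δ
    have := AffineMap.lineMap_mem (-δ) h0Q hfk0Q
    simpa [AffineMap.lineMap_apply] using this
  set g : ℝ → Q := fun δ => ⟨_, hmem δ⟩ with hg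
  have hgc : Continuous g :=
    Continuous.subtype_mk (continuous_neg.smul continuous_const) _
  have hg0 : g 0 = y0 := by
    apply Subtype.ext
    simp [hg, hy0]
  have hopen : IsOpen (g ⁻¹' interior ((↑) ⁻¹' s : Set Q)) := isOpen_interior.preimage hgc
  have h0mem : (0:ℝ) ∈ g ⁻¹' interior ((↑) ⁻¹' s : Set Q) := by
    simp only [Set.mem_preimage, hg0]; exact hy0int
  obtain ⟨ε, hε, hball⟩ := Metric.isOpen_iff.1 hopen 0 h0mem
  have hδ : (ε/2) ∈ g ⁻¹' interior ((↑) ⁻¹' s : Set Q) := by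
    apply hball
    rw [Metric.mem_ball, Real.dist_eq, sub_zero, abs_of_pos (half_pos hε)]
    linarith
  set δ := ε/2 with hδdef
  have hδpos : 0 < δ := half_pos hε
  have hmem2 : (-δ) • f k0 ∈ s := by
    have : g δ ∈ (↑) ⁻¹' s := interior_subset hδ
    exact this
  obtain ⟨w, hw0, hw1, hwx⟩ := mem_hull_weights hmem2
  refine ⟨fun k => (w k + if k = k0 then δ else 0) / (1 + δ), ?_, ?_, ?_⟩
  · rw [← Finset.sum_div, Finset.sum_add_distrib, hw1]
    simp only [Finset.sum_ite_eq', Finset.mem_univ, if_pos]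
    field_simp
  · have : ∀ k, ((w k + if k = k0 then δ else 0) / (1 + δ)) • f k
        = (1+δ)⁻¹ • ((w k + if k = k0 then δ else 0) • f k) := by
      intro k; rw [div_eq_inv_mul, mul_smul]
    simp only [this, ← Finset.smul_sum]
    rw [show ∑ k, ((w k + if k = k0 then δ else 0) • f k)
        = ∑ k, w k • f k + ∑ k, (if k = k0 then δ else 0) • f k by
      rw [← Finset.sum_add_distrib]; congr 1; ext k; rw [add_smul]]
    simp only [ite_smul, zero_smul, Finset.sum_ite_eq', Finset.mem_univ, if_pos, hwx]
    simp
  · have h1 : 0 ≤ w k0 := hw0 k0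
    simp only [if_pos rfl]
    positivity

lemma dep_eq_zero {d n : ℕ} {f : Fin (n+1) → (Fin d → ℝ)} (hf : AffineIndependent ℝ f)
    (h0 : (0 : Fin d → ℝ) ∈ intrinsicInterior ℝ (convexHull ℝ (Set.range f)))
    {mu : Fin (n+1) → ℝ} (hmu : ∑ k, mu k • f k = 0) {k0 : Fin (n+1)} (hk0 : mu k0 = 0) :
    mu = 0 := by
  obtain ⟨lam, hlam1, hlamf, hlampos⟩ := exists_pos_combo h0 k0
  set c := ∑ k, mu k with hc
  have key : ∀ e ∈ Finset.univ, (mu - c • lam) e = 0 := by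
    apply affineIndependent_iff.1 hf
    · simp [Finset.sum_sub_distrib, ← Finset.mul_sum, hlam1, hc]
    · have : ∀ k, (mu - c • lam) k • f k = mu k • f k - c • (lam k • f k) := by
        intro k; simp [sub_smul, mul_smul]
      simp only [this, Finset.sum_sub_distrib, ← Finset.smul_sum, hmu, hlamf, smul_zero, sub_zero]
  have hmueq : ∀ e, mu e = c * lam e := by
    intro e
    have := key e (Finset.mem_univ e)
    simp at this
    linarith
  have hc0 : c = 0 := by
    have := hmueq k0
    rw [hk0] at this
    nlinarith
  funext e
  simp [hmueq e, hc0]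

lemma span_convexHull' {E : Type*} [AddCommGroup E] [Module ℝ E] (s : Set E) :
    Submodule.span ℝ (convexHull ℝ s) = Submodule.span ℝ s := by
  refine le_antisymm (Submodule.span_le.2 ?_) (Submodule.span_mono (subset_convexHull ℝ s))
  exact convexHull_min Submodule.subset_span (Submodule.span ℝ s).convex

lemma span_eq_vectorSpan {d n : ℕ} {f : Fin (n+1) → (Fin d → ℝ)}
    (h0 : (0 : Fin d → ℝ) ∈ affineSpan ℝ (Set.range f)) :
    Submodule.span ℝ (Set.range f) = vectorSpan ℝ (Set.range f) := by
  apply le_antisymm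
  · rw [Submodule.span_le]
    rintro x ⟨k, rfl⟩
    have : f k -ᵥ (0 : Fin d → ℝ) ∈ (affineSpan ℝ (Set.range f)).direction :=
      AffineSubspace.vsub_mem_direction (subset_affineSpan ℝ _ ⟨k, rfl⟩) h0
    rw [direction_affineSpan] at this
    simpa using this
  · rw [vectorSpan_def, Submodule.span_le]
    rintro x ⟨a, ha, b, hb, rfl⟩
    exact sub_mem (Submodule.subset_span ha) (Submodule.subset_span hb)

lemma top_of_affineSpan_top {d : ℕ} {s : Set (Fin d → ℝ)}
    (h : affineSpan ℝ s = ⊤) : Submodule.span ℝ s = ⊤ := by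
  rw [eq_top_iff]
  intro x _
  have hx : x ∈ affineSpan ℝ s := h ▸ AffineSubspace.mem_top ℝ _ x
  have : affineSpan ℝ s ≤ (Submodule.span ℝ s).toAffineSubspace := by
    rw [affineSpan_le]; exact Submodule.subset_span
  exact this hx


set_option maxHeartbeats 1000000 in
set_option synthInstance.maxHeartbeats 200000 in
/-- With `Sᵢ ⊂ ℝ^d` simplices of dimension `dᵢ` containing `0` in
their relative interiors, `P = conv(S₁ ∪ ⋯ ∪ S_t)` full-dimensional with
`vert(Sᵢ) ⊆ vert(P)`, `rᵢ = |vert(Sᵢ) ∩ (vert(S₁) ∪ ⋯ ∪ vert(S_{i-1}))| < dᵢ` and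
`∑(dᵢ - rᵢ) = d`: the kernel of the summation map `φ : span(S₁) × ⋯ × span(S_t) → ℝ^d`
is the linear span of `Ω = {e_{i₂,v} - e_{i₁,v} : i₁ < i₂, v ∈ vert(S_{i₁}) ∩ vert(S_{i₂})}`. -/
theorem kernel_of_summation_map (d t : ℕ) (dvec : Fin t → ℕ)
    (S : Fin t → Set (Fin d → ℝ))
    (hsimp : ∀ i, IsSimplexOfDim (dvec i) (S i))
    (h0 : ∀ i, (0 : Fin d → ℝ) ∈ intrinsicInterior ℝ (S i))
    (hdim : affineSpan ℝ (convexHull ℝ (⋃ i, S i)) = ⊤)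
    (hvert : ∀ i, Set.extremePoints ℝ (S i) ⊆
      Set.extremePoints ℝ (convexHull ℝ (⋃ i, S i)))
    (rvec : Fin t → ℕ)
    (hr : ∀ i, rvec i = (Set.extremePoints ℝ (S i) ∩
      ⋃ j ∈ {j : Fin t | j < i}, Set.extremePoints ℝ (S j)).ncard)
    (hrd : ∀ i, rvec i < dvec i)
    (hsum : ∑ i, (dvec i - rvec i) = d) :
    {x : Fin t → Fin d → ℝ | (∀ i, x i ∈ Submodule.span ℝ (S i)) ∧ ∑ i, x i = 0} =
      (Submodule.span ℝ {w : Fin t → Fin d → ℝ | ∃ i1 i2 : Fin t, i1 < i2 ∧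
        ∃ v ∈ Set.extremePoints ℝ (S i1) ∩ Set.extremePoints ℝ (S i2),
          w = Pi.single i2 v - Pi.single i1 v} : Set (Fin t → Fin d → ℝ)) := by
  classical
  choose f hfind hfS using hsimp
  -- basic notation
  set p : Fin t → Submodule ℝ (Fin d → ℝ) := fun i => Submodule.span ℝ (S i) with hp
  set φ : (Fin t → Fin d → ℝ) →ₗ[ℝ] (Fin d → ℝ) := ∑ i, LinearMap.proj i with hφ
  have hφap : ∀ x : Fin t → Fin d → ℝ, φ x = ∑ i, x i := by
    intro x; simp [hφ]
  set W : Submodule ℝ (Fin t → Fin d → ℝ) := Submodule.pi Set.univ p with hW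
  set K : Submodule ℝ (Fin t → Fin d → ℝ) := W ⊓ LinearMap.ker φ with hK
  set Ω : Set (Fin t → Fin d → ℝ) := {w : Fin t → Fin d → ℝ | ∃ i1 i2 : Fin t, i1 < i2 ∧
        ∃ v ∈ Set.extremePoints ℝ (S i1) ∩ Set.extremePoints ℝ (S i2),
          w = Pi.single i2 v - Pi.single i1 v} with hΩ
  set G : Submodule ℝ (Fin t → Fin d → ℝ) := Submodule.span ℝ Ω with hG
  have hLHS : {x : Fin t → Fin d → ℝ | (∀ i, x i ∈ Submodule.span ℝ (S i)) ∧ ∑ i, x i = 0}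
      = (K : Set (Fin t → Fin d → ℝ)) := by
    ext x
    simp [hK, hW, Submodule.mem_pi, hφap, hp]
  rw [hLHS]
  suffices h : K = G by rw [h]
  -- G ≤ K
  have hGK : G ≤ K := by
    rw [hG, Submodule.span_le]
    rintro w ⟨i1, i2, h12, v, ⟨hv1, hv2⟩, rfl⟩
    constructor
    · intro j _
      have m1 : v ∈ p i1 := Submodule.subset_span (extremePoints_subset hv1)
      have m2 : v ∈ p i2 := Submodule.subset_span (extremePoints_subset hv2)
      by_cases e2 : j = i2 <;> by_cases e1 : j = i1 <;>
        simp_all [Pi.single_apply, Submodule.zero_mem, sub_mem, Submodule.neg_mem]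
    · rw [SetLike.mem_coe, LinearMap.mem_ker, hφap]
      simp only [Pi.sub_apply, Finset.sum_sub_distrib, Finset.sum_pi_single',
        Finset.mem_univ, if_pos, sub_self]
  -- finrank K = ∑ rvec
  have h0S : ∀ i, (0:Fin d → ℝ) ∈ S i := fun i => intrinsicInterior_subset (h0 i)
  have h0aff : ∀ i, (0:Fin d → ℝ) ∈ affineSpan ℝ (Set.range (f i)) := by
    intro i
    have := subset_affineSpan ℝ (convexHull ℝ (Set.range (f i)))
      (by rw [← hfS i]; exact h0S i)
    rwa [affineSpan_convexHull] at this
  have hpspan : ∀ i, p i = Submodule.span ℝ (Set.range (f i)) := fun i => by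
    show Submodule.span ℝ (S i) = _
    rw [hfS i, span_convexHull']
  have hfr_p : ∀ i, Module.finrank ℝ (p i) = dvec i := by
    intro i
    rw [hpspan i, span_eq_vectorSpan (h0aff i)]
    exact (hfind i).finrank_vectorSpan (by simp)
  have hfrW : Module.finrank ℝ W = ∑ i, dvec i := by
    rw [hW, finrank_piSub p]
    exact Finset.sum_congr rfl fun i _ => hfr_p i
  set φ' : W →ₗ[ℝ] (Fin d → ℝ) := φ.domRestrict W with hφ'
  have hrange_top : LinearMap.range φ' = ⊤ := by
    have hspan_top : Submodule.span ℝ (⋃ i, S i) = ⊤ :=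
      top_of_affineSpan_top (by rwa [affineSpan_convexHull] at hdim)
    rw [eq_top_iff, ← hspan_top, Submodule.span_le]
    rintro x hx
    rw [Set.mem_iUnion] at hx
    obtain ⟨i, hx⟩ := hx
    have hmemW : Pi.single i x ∈ W := by
      intro j _
      by_cases e : j = i
      · subst e; rw [Pi.single_eq_same]; exact Submodule.subset_span hx
      · rw [Pi.single_eq_of_ne e]; exact Submodule.zero_mem _
    exact ⟨⟨Pi.single i x, hmemW⟩, by
      simp only [hφ', LinearMap.domRestrict_apply, hφap, Finset.sum_pi_single',
        Finset.mem_univ, if_pos]⟩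
  have hkerφ' : LinearMap.ker φ' = Submodule.comap W.subtype K := by
    rw [hφ', LinearMap.ker_domRestrict, hK, Submodule.comap_inf,
      Submodule.comap_subtype_self, top_inf_eq]
  have hfrker : Module.finrank ℝ (LinearMap.ker φ') = Module.finrank ℝ K := by
    rw [hkerφ']
    exact (Submodule.comapSubtypeEquivOfLe (inf_le_left : K ≤ W)).finrank_eq
  have hrn := LinearMap.finrank_range_add_finrank_ker φ'
  rw [hrange_top, hfrker, hfrW] at hrn
  have hfrtop : Module.finrank ℝ (⊤ : Submodule ℝ (Fin d → ℝ)) = d := by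
    rw [finrank_top]; simp
  rw [hfrtop] at hrn
  have hdsum : ∑ i, dvec i = d + ∑ i, rvec i := by
    have : ∀ i, dvec i = (dvec i - rvec i) + rvec i := fun i =>
      (Nat.sub_add_cancel (hrd i).le).symm
    rw [Finset.sum_congr rfl fun i _ => this i, Finset.sum_add_distrib, hsum]
  have hfrK : Module.finrank ℝ K = ∑ i, rvec i := by omega
  -- finrank G ≥ ∑ rvec
  have hfrG : ∑ i, rvec i ≤ Module.finrank ℝ G := by
    set V : Fin t → Set (Fin d → ℝ) := fun i => Set.extremePoints ℝ (S i) with hV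
    have hVsub : ∀ i, V i ⊆ Set.range (f i) := by
      intro i v hv
      rw [hV] at hv; simp only at hv
      rw [hfS i] at hv
      exact extremePoints_convexHull_subset hv
    set T : Fin t → Set (Fin d → ℝ) :=
      fun i => V i ∩ ⋃ j ∈ {j : Fin t | j < i}, V j with hT
    have hTV : ∀ i, T i ⊆ V i := fun i => Set.inter_subset_left
    have hTfin : ∀ i, (T i).Finite :=
      fun i => (Set.finite_range (f i)).subset ((hTV i).trans (hVsub i))
    set Tf : Fin t → Finset (Fin d → ℝ) := fun i => (hTfin i).toFinset with hTf
    have hTcard : ∀ i, (Tf i).card = rvec i := by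
      intro i
      rw [hr i, Set.ncard_eq_toFinset_card _ (hTfin i)]
    set ι := Σ i : Fin t, {v // v ∈ Tf i} with hι
    have hchoice : ∀ σ : ι, ∃ j : Fin t, j < σ.1 ∧ (σ.2.1 : Fin d → ℝ) ∈ V j := by
      rintro ⟨i, v, hv⟩
      have hvT : (v : Fin d → ℝ) ∈ T i := (hTfin i).mem_toFinset.mp hv
      have := hvT.2
      simp only [Set.mem_iUnion, Set.mem_setOf_eq] at this
      obtain ⟨j, hj, hmem⟩ := this
      exact ⟨j, hj, hmem⟩
    choose J hJlt hJmem using hchoice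
    set w : ι → (Fin t → Fin d → ℝ) :=
      fun σ => Pi.single σ.1 (σ.2.1 : Fin d → ℝ) - Pi.single (J σ) (σ.2.1 : Fin d → ℝ) with hw
    have hwΩ : ∀ σ, w σ ∈ Ω := by
      intro σ
      exact ⟨J σ, σ.1, hJlt σ, σ.2.1, ⟨hJmem σ, (hTV σ.1 ((hTfin σ.1).mem_toFinset.mp σ.2.2))⟩, rfl⟩
    have hli : LinearIndependent ℝ w := by
      rw [Fintype.linearIndependent_iff]
      intro g hg
      have key : ∀ σ : ι, (∀ τ : ι, σ.1 < τ.1 → g τ = 0) → g σ = 0 := by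
        rintro ⟨i, v⟩ hi
        have hcoord : ∑ τ : ι, g τ • (w τ) i = 0 := by
          have := congrFun hg i
          simpa [Finset.sum_apply] using this
        have hterm : ∀ τ : ι, g τ • (w τ) i
            = if τ.1 = i then g τ • (τ.2.1 : Fin d → ℝ) else 0 := by
          rintro ⟨i', v'⟩
          by_cases h : i' = i
          · subst h
            simp only [if_pos rfl, hw]
            have hJne : i' ≠ J ⟨i', v'⟩ := fun he => absurd (hJlt ⟨i', v'⟩) (by rw [← he]; exact lt_irrefl _)
            rw [Pi.sub_apply, Pi.single_eq_same, Pi.single_eq_of_ne hJne, sub_zero]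
            simp
          · rw [if_neg h]
            rcases lt_or_gt_of_ne (fun he => h he.symm) with hlt | hgt
            · -- i < i' : coefficient zero
              rw [hi ⟨i', v'⟩ hlt, zero_smul]
            · -- i' < i : both singles vanish at i
              have h1 : i ≠ i' := fun he => h he.symm
              have h2 : i ≠ J ⟨i', v'⟩ := by
                have := hJlt ⟨i', v'⟩
                intro he; rw [← he] at this
                exact absurd (this.trans hgt) (lt_irrefl i)
              rw [hw]
              simp only [Pi.sub_apply, Pi.single_eq_of_ne h1,
                Pi.single_eq_of_ne h2, sub_zero, smul_zero]
        rw [Finset.sum_congr rfl (fun τ _ => hterm τ)] at hcoord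
        rw [← Finset.univ_sigma_univ, Finset.sum_sigma] at hcoord
        have hcoord' : ∑ a : Fin t, ∑ s : {v // v ∈ Tf a},
            (if a = i then g ⟨a, s⟩ • (s.1 : Fin d → ℝ) else 0) = 0 := hcoord
        have hzero : ∀ b ∈ (Finset.univ : Finset (Fin t)), b ≠ i →
            (∑ s : {v // v ∈ Tf b}, if b = i then g ⟨b, s⟩ • (s.1 : Fin d → ℝ) else 0) = 0 := by
          intro b _ hne
          apply Finset.sum_eq_zero
          intro s _
          rw [if_neg hne]
        rw [Finset.sum_eq_single_of_mem i (Finset.mem_univ i) hzero] at hcoord'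
        simp only [if_pos rfl] at hcoord'
        have houter : ∑ v' : {v // v ∈ Tf i}, g ⟨i, v'⟩ • (v'.1 : Fin d → ℝ) = 0 := hcoord'
        -- build weights on the simplex vertices
        have hTfV : ∀ (v' : {v // v ∈ Tf i}), (v'.1 : Fin d → ℝ) ∈ Set.range (f i) :=
          fun v' => hVsub i (hTV i ((hTfin i).mem_toFinset.mp v'.2))
        choose idx hidx using hTfV
        have hinj : Function.Injective idx := by
          intro a b hab
          apply Subtype.ext
          rw [← hidx a, ← hidx b, hab]
        have hcardTi : Fintype.card {v // v ∈ Tf i} = rvec i := by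
          rw [Fintype.card_coe, hTcard]
        have hnsurj : ¬ Function.Surjective idx := by
          intro hs
          have hc := Fintype.card_le_of_surjective idx hs
          rw [hcardTi, Fintype.card_fin] at hc
          have := hrd i
          omega
        obtain ⟨k0, hk0⟩ : ∃ k0 : Fin (dvec i + 1), ∀ v', idx v' ≠ k0 := by
          by_contra hcon
          push_neg at hcon
          exact hnsurj (fun b => hcon b)
        set μ : Fin (dvec i + 1) → ℝ :=
          fun k => ∑ v' ∈ Finset.univ.filter (fun v' => idx v' = k), g ⟨i, v'⟩ with hμ
        have hμsum : ∑ k, μ k • f i k = 0 := by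
          rw [← houter]
          calc ∑ k, μ k • f i k
              = ∑ k, ∑ v' ∈ Finset.univ.filter (fun v' => idx v' = k),
                  g ⟨i, v'⟩ • f i k := by
                apply Finset.sum_congr rfl
                intro k _
                rw [hμ, Finset.sum_smul]
            _ = ∑ k, ∑ v' ∈ Finset.univ.filter (fun v' => idx v' = k),
                  g ⟨i, v'⟩ • (v'.1 : Fin d → ℝ) := by
                apply Finset.sum_congr rfl
                intro k _
                apply Finset.sum_congr rfl
                intro v' hv'
                rw [← (Finset.mem_filter.mp hv').2, hidx]
            _ = ∑ v' : {v // v ∈ Tf i}, g ⟨i, v'⟩ • (v'.1 : Fin d → ℝ) :=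
                Finset.sum_fiberwise _ idx _
        have hμk0 : μ k0 = 0 := by
          rw [hμ]
          apply Finset.sum_eq_zero
          intro v' hv'
          exact absurd (Finset.mem_filter.mp hv').2 (hk0 v')
        have h0' : (0 : Fin d → ℝ) ∈ intrinsicInterior ℝ (convexHull ℝ (Set.range (f i))) := by
          rw [← hfS i]; exact h0 i
        have hμz := dep_eq_zero (hfind i) h0' hμsum hμk0
        have hsingle : μ (idx v) = g ⟨i, v⟩ := by
          rw [hμ]
          apply Finset.sum_eq_single_of_mem v
          · exact Finset.mem_filter.mpr ⟨Finset.mem_univ v, rfl⟩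
          · intro b hb hne
            exact absurd (hinj (Finset.mem_filter.mp hb).2) hne
        rw [← hsingle, hμz]
        simp
      have main : ∀ n : ℕ, ∀ σ : ι, t ≤ σ.1.val + n → g σ = 0 := by
        intro n
        induction n with
        | zero => intro σ hσ; exact absurd hσ (by have := σ.1.isLt; omega)
        | succ n ih =>
          intro σ hσ
          apply key σ
          intro τ hτ
          have : σ.1.val < τ.1.val := hτ
          exact ih τ (by omega)
      intro σ
      exact main t σ (by omega)
    have hwG : ∀ σ, w σ ∈ G := fun σ => Submodule.subset_span (hwΩ σ)
    have hli' : LinearIndependent ℝ (fun σ => (⟨w σ, hwG σ⟩ : G)) := by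
      apply LinearIndependent.of_comp G.subtype
      exact hli
    have hcard := hli'.fintype_card_le_finrank
    rw [Fintype.card_sigma] at hcard
    simpa [Fintype.card_coe, hTcard] using hcard
  exact (Submodule.eq_of_le_of_finrank_le hGK (by rw [hfrK]; exact hfrG)).symm
end

section
/- Let n ≥ 1 and let β_0, β_1, …, β_n be positive reals with β_0 + β_1 + ⋯ + β_n = 1. Let S = conv{v_0, e_1, …, e_n} ⊂ ℝ^n, where e_1, …, e_n is the standard basis and v_0 = −Σ_{j=1}^n (β_j / β_0) e_j (so that β_0 v_0 + Σ_{j=1}^n β_j e_j = 0). Then the dual simplex satisfies S* = conv( { −(e_1 + ⋯ + e_n) } ∪ { (1/β_w) e_w − (e_1 + ⋯ + e_n) : w = 1, …, n } ). -/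
open MeasureTheory Set
open scoped ENNReal

lemma sum_mul_single' {n : ℕ} (c : Fin n → ℝ) (j : Fin n) :
    ∑ w, c w * (Pi.single w (1:ℝ) : Fin n → ℝ) j = c j := by
  simp [Pi.single_apply, mul_ite, Finset.sum_ite_eq]

lemma mul_single_sum' {n : ℕ} (y : Fin n → ℝ) (w : Fin n) :
    ∑ i, y i * (Pi.single w (1:ℝ) : Fin n → ℝ) i = y w := by
  simp [Pi.single_apply, mul_ite, Finset.sum_ite_eq']


/-- Let `S = conv{v₀, e₁, …, eₙ} ⊂ ℝ^n` with
`v₀ = -∑ⱼ (βⱼ/β₀) eⱼ`, where `β₀, β₁, …, βₙ > 0` and `β₀ + ∑ βⱼ = 1`. Then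
`S* = conv({-(e₁ + ⋯ + eₙ)} ∪ {(1/β_w) e_w - (e₁ + ⋯ + eₙ) : w = 1, …, n})`. -/
theorem polarDual_simplex (n : ℕ) (hn : 1 ≤ n) (β0 : ℝ) (β : Fin n → ℝ)
    (hβ0 : 0 < β0) (hβ : ∀ j, 0 < β j) (hsum : β0 + ∑ j, β j = 1) :
    polarDual (convexHull ℝ ({fun j => -(β j / β0)} ∪
        Set.range fun w : Fin n => (Pi.single w (1 : ℝ) : Fin n → ℝ))) =
      convexHull ℝ ({fun _ => -1} ∪
        {y : Fin n → ℝ | ∃ w : Fin n,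
          y = (1 / β w) • (Pi.single w (1 : ℝ) : Fin n → ℝ) - fun _ => 1}) := by
  simp only [polarDual]
  have hβsum : ∑ j, β j = 1 - β0 := by linarith
  set T : Set (Fin n → ℝ) := {y | (∀ w, -1 ≤ y w) ∧ ∑ j, β j * y j ≤ β0} with hT
  -- key formula for the pairing with v₀
  have heq : ∀ y : Fin n → ℝ, ∑ i, y i * (-(β i / β0)) = -((∑ i, β i * y i) / β0) := by
    intro y
    calc ∑ i, y i * (-(β i / β0)) = ∑ i, -((β i * y i) / β0) :=
          Finset.sum_congr rfl fun i _ => by ring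
      _ = -(∑ i, (β i * y i) / β0) := by rw [Finset.sum_neg_distrib]
      _ = -((∑ i, β i * y i) / β0) := by rw [Finset.sum_div]
  have hTconv : Convex ℝ T := by
    intro x hx y hy a b ha hb hab
    refine ⟨fun w => ?_, ?_⟩
    · have h1 := hx.1 w; have h2 := hy.1 w
      simp only [Pi.add_apply, Pi.smul_apply, smul_eq_mul]
      nlinarith
    · have h1 := hx.2; have h2 := hy.2
      have e : ∑ j, β j * (a • x + b • y) j
          = a * ∑ j, β j * x j + b * ∑ j, β j * y j := by
        rw [Finset.mul_sum, Finset.mul_sum, ← Finset.sum_add_distrib]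
        exact Finset.sum_congr rfl fun j _ => by
          simp only [Pi.add_apply, Pi.smul_apply, smul_eq_mul]; ring
      rw [e]; nlinarith
  -- Step 1: LHS = T
  have key1 : {y : Fin n → ℝ | ∀ x ∈ (convexHull ℝ (({fun j => -(β j / β0)} : Set (Fin n → ℝ)) ∪
        Set.range fun w : Fin n => (Pi.single w (1 : ℝ) : Fin n → ℝ))), -1 ≤ ∑ i, y i * x i} = T := by
    ext y
    simp only [Set.mem_setOf_eq, hT]
    constructor
    · intro h
      refine ⟨fun w => ?_, ?_⟩
      · have := h (Pi.single w 1) (subset_convexHull ℝ _ (Or.inr ⟨w, rfl⟩))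
        rwa [mul_single_sum'] at this
      · have hv := h (fun j => -(β j / β0)) (subset_convexHull ℝ _ (Or.inl rfl))
        rw [heq y] at hv
        have h1 : (∑ i, β i * y i) / β0 ≤ 1 := by linarith
        exact (div_le_one hβ0).mp h1
    · rintro ⟨h1, h2⟩ x hx
      have hlin : IsLinearMap ℝ (fun x : Fin n → ℝ => ∑ i, y i * x i) := by
        constructor
        · intro a b
          rw [← Finset.sum_add_distrib]
          exact Finset.sum_congr rfl fun i _ => by
            simp only [Pi.add_apply]; ring
        · intro c a
          simp only [smul_eq_mul, Finset.mul_sum]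
          exact Finset.sum_congr rfl fun i _ => by
            simp only [Pi.smul_apply, smul_eq_mul]; ring
      refine convexHull_min ?_ (convex_halfSpace_ge hlin (-1)) hx
      rintro x (rfl | ⟨w, rfl⟩)
      · show -1 ≤ ∑ i, y i * (-(β i / β0))
        rw [heq y]
        have : (∑ i, β i * y i) / β0 ≤ 1 := (div_le_one hβ0).mpr h2
        linarith
      · show -1 ≤ ∑ i, y i * (Pi.single w (1:ℝ) : Fin n → ℝ) i
        rw [mul_single_sum']
        exact h1 w
  -- Step 2: RHS = T
  have key2 : convexHull ℝ (({fun _ => -1} : Set (Fin n → ℝ)) ∪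
        {y : Fin n → ℝ | ∃ w : Fin n,
          y = (1 / β w) • (Pi.single w (1 : ℝ) : Fin n → ℝ) - fun _ => 1}) = T := by
    apply Set.Subset.antisymm
    · refine convexHull_min ?_ hTconv
      rintro x (rfl | ⟨w, rfl⟩)
      · refine ⟨fun w => le_refl _, ?_⟩
        have : ∑ j, β j * (-1 : ℝ) = -(1 - β0) := by
          rw [← hβsum, ← Finset.sum_neg_distrib]
          exact Finset.sum_congr rfl fun j _ => by ring
        rw [this]; linarith
      · constructor
        · intro j
          simp only [Pi.sub_apply, Pi.smul_apply, smul_eq_mul]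
          have hx : 0 ≤ (Pi.single w (1:ℝ) : Fin n → ℝ) j := by
            rw [Pi.single_apply]; split_ifs <;> norm_num
          have : 0 ≤ 1 / β w * (Pi.single w (1:ℝ) : Fin n → ℝ) j :=
            mul_nonneg (div_nonneg zero_le_one (hβ w).le) hx
          linarith
        · have e : ∑ j, β j * (((1 / β w) • (Pi.single w (1:ℝ) : Fin n → ℝ) - (fun _ => 1) : Fin n → ℝ) j)
              = (∑ j, (β j * (1 / β w)) * (Pi.single w (1:ℝ) : Fin n → ℝ) j) - ∑ j, β j := by
            rw [← Finset.sum_sub_distrib]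
            exact Finset.sum_congr rfl fun j _ => by
              simp only [Pi.sub_apply, Pi.smul_apply, smul_eq_mul]; ring
          rw [e, mul_single_sum' (fun j => β j * (1 / β w)) w, hβsum]
          have : β w * (1 / β w) = 1 := by
            rw [mul_one_div]; exact div_self (hβ w).ne'
          rw [this]; linarith
    · intro y hy
      obtain ⟨h1, h2⟩ := hy
      set S : ℝ := ∑ w, β w * (y w + 1) with hS
      have hS' : S = (∑ w, β w * y w) + (1 - β0) := by
        rw [hS, ← hβsum, ← Finset.sum_add_distrib]
        exact Finset.sum_congr rfl fun w _ => by ring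
      have hSle : S ≤ 1 := by rw [hS']; linarith
      set W : Option (Fin n) → ℝ := fun o => o.elim (1 - S) (fun j => β j * (y j + 1)) with hW
      set Z : Option (Fin n) → (Fin n → ℝ) := fun o =>
        o.elim (fun _ => -1) (fun w => (1 / β w) • (Pi.single w (1:ℝ) : Fin n → ℝ) - fun _ => 1)
        with hZ
      have hWsum : ∑ o : Option (Fin n), W o = 1 := by
        rw [Fintype.sum_option]
        simp only [hW, Option.elim_none, Option.elim_some]
        rw [← hS]; ring
      have hWnonneg : ∀ o, 0 ≤ W o := by
        rintro (_ | j)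
        · simp only [hW, Option.elim_none]; linarith
        · simp only [hW, Option.elim_some]
          exact mul_nonneg (hβ j).le (by linarith [h1 j])
      have hZmem : ∀ o, Z o ∈ (({fun _ => -1} : Set (Fin n → ℝ)) ∪
          {y : Fin n → ℝ | ∃ w : Fin n,
            y = (1 / β w) • (Pi.single w (1 : ℝ) : Fin n → ℝ) - fun _ => 1}) := by
        rintro (_ | w)
        · exact Or.inl rfl
        · exact Or.inr ⟨w, rfl⟩
      have hmem : ∑ o : Option (Fin n), W o • Z o ∈ convexHull ℝ
          (({fun _ => -1} : Set (Fin n → ℝ)) ∪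
            {y : Fin n → ℝ | ∃ w : Fin n,
              y = (1 / β w) • (Pi.single w (1 : ℝ) : Fin n → ℝ) - fun _ => 1}) :=
        (convex_convexHull ℝ _).sum_mem (fun o _ => hWnonneg o) hWsum
          (fun o _ => subset_convexHull ℝ _ (hZmem o))
      have hye : y = ∑ o : Option (Fin n), W o • Z o := by
        funext j
        rw [Finset.sum_apply]
        rw [Fintype.sum_option]
        have e2 : ∀ w : Fin n, (W (some w) • Z (some w)) j
            = (W (some w) * (1 / β w)) * (Pi.single w (1:ℝ) : Fin n → ℝ) j - W (some w) := by
          intro w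
          simp only [hW, hZ, Option.elim_some, Pi.smul_apply, Pi.sub_apply, smul_eq_mul]
          ring
        rw [Finset.sum_congr rfl fun w _ => e2 w, Finset.sum_sub_distrib,
          sum_mul_single' (fun w => W (some w) * (1 / β w)) j]
        have eWj : W (some j) * (1 / β j) = y j + 1 := by
          simp only [hW, Option.elim_some]
          rw [mul_one_div]
          exact mul_div_cancel_left₀ _ (hβ j).ne'
        have eWS : ∑ w, W (some w) = S := by
          simp only [hW, Option.elim_some, hS]
        rw [eWj, eWS]
        simp only [hW, hZ, Option.elim_none, Pi.smul_apply, smul_eq_mul]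
        ring
      rw [hye]; exact hmem
  rw [key1, key2]
end

section
/- Let n ≥ 1, let β_0, β_1, …, β_n be positive reals with β_0 + β_1 + ⋯ + β_n = 1, and let S = conv{v_0, e_1, …, e_n} ⊂ ℝ^n with v_0 = −Σ_{j=1}^n (β_j / β_0) e_j. Let Q ⊆ {1, …, n} with |Q| = q ≤ n, and let F* = { y ∈ S* : y_j = −1 for all j ∈ Q }. Then the (n − q)-dimensional volume of F*, i.e. the Lebesgue measure in ℝ^{n−q} of the image of F* under the projection onto the coordinates not in Q, equals (1 / (n − q)!) · Π_{j ∈ {1,…,n} ∖ Q} (1 / β_j). -/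
open MeasureTheory Set
open scoped ENNReal

lemma VFD.polarDual_convexHull {d : ℕ} (A : Set (Fin d → ℝ)) :
    polarDual (convexHull ℝ A) = polarDual A := by
  apply Set.Subset.antisymm
  · intro y hy x hx
    exact hy x (subset_convexHull ℝ A hx)
  · intro y hy x hx
    have hconv : Convex ℝ {x : Fin d → ℝ | -1 ≤ ∑ i, y i * x i} := by
      have : IsLinearMap ℝ (fun x : Fin d → ℝ => ∑ i, y i * x i) := by
        constructor
        · intro a b; simp [mul_add, Finset.sum_add_distrib]
        · intro c a; simp [Finset.mul_sum]; congr 1; funext i; ring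
      exact convex_halfSpace_ge this (-1)
    exact convexHull_min hy hconv hx

lemma VFD.sum_single {d : ℕ} (y : Fin d → ℝ) (w : Fin d) :
    ∑ i, y i * (Pi.single w (1:ℝ) : Fin d → ℝ) i = y w := by
  rw [Finset.sum_eq_single w]
  · simp
  · intro i _ hne; rw [Pi.single_eq_of_ne hne]; ring
  · simp

lemma VFD.meas_simplex {ι : Type*} [Fintype ι] (r : ℝ) :
    MeasurableSet {z : ι → ℝ | (∀ i, 0 ≤ z i) ∧ ∑ i, z i ≤ r} := by
  have h1 : MeasurableSet {z : ι → ℝ | ∀ i, 0 ≤ z i} := by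
    rw [setOf_forall]
    exact MeasurableSet.iInter fun i => measurableSet_le measurable_const (measurable_pi_apply i)
  have h2 : MeasurableSet {z : ι → ℝ | ∑ i, z i ≤ r} :=
    measurableSet_le (Finset.univ.measurable_sum fun i _ => measurable_pi_apply i)
      measurable_const
  exact h1.inter h2

lemma VFD.vol_simplex1 : ∀ (m : ℕ) (r : ℝ), 0 ≤ r →
    volume {z : Fin m → ℝ | (∀ i, 0 ≤ z i) ∧ ∑ i, z i ≤ r}
      = ENNReal.ofReal (r ^ m / m.factorial) := by
  intro m
  induction m with
  | zero =>
      intro r hr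
      have h : {z : Fin 0 → ℝ | (∀ i, 0 ≤ z i) ∧ ∑ i, z i ≤ r} = univ := by
        ext z; simp [hr]
      rw [h, volume_pi, Measure.pi_univ]
      simp
  | succ m ih =>
      intro r hr
      set T : Set (ℝ × (Fin m → ℝ)) :=
        {p | 0 ≤ p.1 ∧ (∀ i, 0 ≤ p.2 i) ∧ p.1 + ∑ i, p.2 i ≤ r} with hTdef
      have hT : MeasurableSet T := by
        have h1 : MeasurableSet {p : ℝ × (Fin m → ℝ) | 0 ≤ p.1} :=
          measurableSet_le measurable_const measurable_fst
        have h2 : MeasurableSet {p : ℝ × (Fin m → ℝ) | ∀ i, 0 ≤ p.2 i} := by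
          rw [setOf_forall]
          exact MeasurableSet.iInter fun i =>
            measurableSet_le measurable_const measurable_snd.eval
        have h3 : MeasurableSet {p : ℝ × (Fin m → ℝ) | p.1 + ∑ i, p.2 i ≤ r} :=
          measurableSet_le (measurable_fst.add
            (Finset.univ.measurable_sum fun i _ => measurable_snd.eval))
            measurable_const
        exact h1.inter (h2.inter h3)
      have hpre : {z : Fin (m+1) → ℝ | (∀ i, 0 ≤ z i) ∧ ∑ i, z i ≤ r} =
          (MeasurableEquiv.piFinSuccAbove (fun _ : Fin (m+1) => ℝ) 0) ⁻¹' T := by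
        ext f
        simp only [mem_setOf_eq, mem_preimage, MeasurableEquiv.piFinSuccAbove,
          MeasurableEquiv.coe_mk, MeasurableEquiv.piFinSuccAbove_apply, hTdef, Fin.forall_fin_succ,
          Fin.sum_univ_succ, Fin.succAbove_zero, Function.comp, Fin.removeNth]
        tauto
      rw [hpre,
        (volume_preserving_piFinSuccAbove (fun _ : Fin (m+1) => ℝ) 0).measure_preimage
          hT.nullMeasurableSet]
      rw [Measure.volume_eq_prod, Measure.prod_apply hT]
      have hslice : ∀ x : ℝ, volume (Prod.mk x ⁻¹' T) =
          Set.indicator (Icc 0 r) (fun x => ENNReal.ofReal ((r - x) ^ m / m.factorial)) x := by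
        intro x
        rcases le_or_gt 0 x with hx | hx
        · rcases le_or_gt x r with hxr | hxr
          · have : Prod.mk x ⁻¹' T = {z : Fin m → ℝ | (∀ i, 0 ≤ z i) ∧ ∑ i, z i ≤ r - x} := by
              ext z
              simp only [mem_preimage, hTdef, mem_setOf_eq]
              constructor
              · rintro ⟨-, h2, h3⟩; exact ⟨h2, by linarith⟩
              · rintro ⟨h2, h3⟩; exact ⟨hx, h2, by linarith⟩
            rw [this, ih _ (by linarith), Set.indicator_of_mem (Set.mem_Icc.mpr ⟨hx, hxr⟩) _]
          · have : Prod.mk x ⁻¹' T = ∅ := by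
              ext z
              simp only [mem_preimage, hTdef, mem_setOf_eq, mem_empty_iff_false, iff_false]
              rintro ⟨-, h2, h3⟩
              have : (0:ℝ) ≤ ∑ i, z i := Finset.sum_nonneg fun i _ => h2 i
              linarith
            rw [this, measure_empty, Set.indicator_of_notMem (by simp; intro; linarith)]
        · have : Prod.mk x ⁻¹' T = ∅ := by
            ext z
            simp only [mem_preimage, hTdef, mem_setOf_eq, mem_empty_iff_false, iff_false]
            rintro ⟨h1, -, -⟩; linarith
          rw [this, measure_empty, Set.indicator_of_notMem (by simp; intro; linarith)]
      rw [lintegral_congr hslice, lintegral_indicator measurableSet_Icc]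
      rw [← ofReal_integral_eq_lintegral_ofReal]
      · congr 1
        rw [integral_Icc_eq_integral_Ioc, ← intervalIntegral.integral_of_le hr]
        have hcomp : (∫ x in (0:ℝ)..r, (r - x) ^ m / m.factorial)
            = ∫ x in (0:ℝ)..r, x ^ m / m.factorial := by
          simpa using intervalIntegral.integral_comp_sub_left
            (fun t : ℝ => t ^ m / m.factorial) r (a := 0) (b := r)
        rw [hcomp, intervalIntegral.integral_div, integral_pow]
        rw [pow_succ, Nat.factorial_succ]
        push_cast
        field_simp
        simp
      · exact (Continuous.integrableOn_Icc (by continuity))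
      · filter_upwards [self_mem_ae_restrict measurableSet_Icc] with x hx
        have : 0 ≤ r - x := by simp at hx; linarith [hx.2]
        positivity

/-- With `S = conv{v₀, e₁, …, eₙ} ⊂ ℝ^n`,
`v₀ = -∑ⱼ (βⱼ/β₀) eⱼ`, `β₀, βⱼ > 0`, `β₀ + ∑ βⱼ = 1`, and `Q ⊆ {1, …, n}` with
`|Q| = q`, the `(n - q)`-dimensional volume of `F* = {y ∈ S* : yⱼ = -1 ∀ j ∈ Q}`
(the Lebesgue measure of its projection onto the coordinates not in `Q`) equals
`(1/(n - q)!) · ∏_{j ∉ Q} (1/βⱼ)`. -/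
theorem volume_face_of_dual_simplex (n : ℕ) (hn : 1 ≤ n) (β0 : ℝ) (β : Fin n → ℝ)
    (hβ0 : 0 < β0) (hβ : ∀ j, 0 < β j) (hsum : β0 + ∑ j, β j = 1)
    (Q : Finset (Fin n)) :
    volume ((fun (y : Fin n → ℝ) (j : {j : Fin n // j ∉ Q}) => y j.1) ''
        {y ∈ polarDual (convexHull ℝ ({fun j => -(β j / β0)} ∪
          Set.range fun w : Fin n => (Pi.single w (1 : ℝ) : Fin n → ℝ))) |
            ∀ j ∈ Q, y j = -1}) =
      ENNReal.ofReal ((1 / ((n - Q.card).factorial : ℝ)) * ∏ j ∈ Qᶜ, (1 / β j)) := by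
  classical
  set ι := {j : Fin n // j ∉ Q}
  set m := n - Q.card with hm
  -- Step 1: characterize the polar dual
  have hv0 : ∀ y : Fin n → ℝ,
      (-1 ≤ ∑ i, y i * (-(β i / β0))) ↔ ∑ i, β i * y i ≤ β0 := by
    intro y
    have hv : (∑ i, y i * (-(β i / β0))) = (∑ i, -(β i * y i)) / β0 := by
      rw [Finset.sum_div]
      exact Finset.sum_congr rfl fun i _ => by simp only [div_eq_mul_inv]; ring
    rw [hv, le_div_iff₀ hβ0, Finset.sum_neg_distrib]
    constructor <;> intro h <;> linarith
  have hmem : ∀ y : Fin n → ℝ,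
      y ∈ polarDual (convexHull ℝ (({fun j => -(β j / β0)} : Set (Fin n → ℝ)) ∪
        Set.range fun w : Fin n => (Pi.single w (1 : ℝ) : Fin n → ℝ))) ↔
      ((∀ i, -1 ≤ y i) ∧ ∑ i, β i * y i ≤ β0) := by
    intro y
    rw [VFD.polarDual_convexHull]
    constructor
    · intro h
      refine ⟨fun w => ?_, ?_⟩
      · have := h _ (Set.mem_union_right _ ⟨w, rfl⟩)
        rwa [VFD.sum_single] at this
      · have := h _ (Set.mem_union_left _ rfl)
        exact (hv0 y).mp this
    · rintro ⟨h1, h2⟩ x hx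
      rcases hx with hx | ⟨w, rfl⟩
      · rw [Set.mem_singleton_iff] at hx
        subst hx
        exact (hv0 y).mpr h2
      · rw [VFD.sum_single]; exact h1 w
  -- Step 2: characterize the projected image
  set c : ℝ := β0 + ∑ i ∈ Q, β i with hc
  have himg : ((fun (y : Fin n → ℝ) (j : ι) => y j.1) ''
      {y ∈ polarDual (convexHull ℝ (({fun j => -(β j / β0)} : Set (Fin n → ℝ)) ∪
        Set.range fun w : Fin n => (Pi.single w (1 : ℝ) : Fin n → ℝ))) |
          ∀ j ∈ Q, y j = -1}) =
      {z : ι → ℝ | (∀ j, -1 ≤ z j) ∧ ∑ j : ι, β j.1 * z j ≤ c} := by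
    ext z
    constructor
    · rintro ⟨y, ⟨hy, hyQ⟩, rfl⟩
      obtain ⟨hy1, hy2⟩ := (hmem y).mp hy
      refine ⟨fun j => hy1 j.1, ?_⟩
      have hsplit : ∑ i ∈ Q, (β i * y i) + ∑ i ∈ Qᶜ, (β i * y i) = ∑ i, β i * y i :=
        Finset.sum_add_sum_compl Q _
      have hQv : ∑ i ∈ Q, β i * y i = -∑ i ∈ Q, β i := by
        rw [← Finset.sum_neg_distrib]
        exact Finset.sum_congr rfl fun i hi => by rw [hyQ i hi]; ring
      have hsub : ∑ j : ι, β j.1 * y j.1 = ∑ i ∈ Qᶜ, β i * y i :=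
        (Finset.sum_subtype Qᶜ (fun x => Finset.mem_compl) fun i => β i * y i).symm
      show ∑ j : ι, β j.1 * y j.1 ≤ c
      rw [hsub, hc]
      linarith
    · rintro ⟨hz1, hz2⟩
      refine ⟨fun i => if h : i ∈ Q then -1 else z ⟨i, h⟩, ⟨(hmem _).mpr ⟨?_, ?_⟩, ?_⟩, ?_⟩
      · intro i
        by_cases h : i ∈ Q
        · simp [h]
        · simp only [dif_neg h]; exact hz1 ⟨i, h⟩
      · have hsplit : ∑ i ∈ Q, (β i * (if h : i ∈ Q then (-1:ℝ) else z ⟨i, h⟩))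
            + ∑ i ∈ Qᶜ, (β i * (if h : i ∈ Q then (-1:ℝ) else z ⟨i, h⟩))
            = ∑ i, β i * (if h : i ∈ Q then (-1:ℝ) else z ⟨i, h⟩) :=
          Finset.sum_add_sum_compl Q _
        have hQv : ∑ i ∈ Q, (β i * (if h : i ∈ Q then (-1:ℝ) else z ⟨i, h⟩))
            = -∑ i ∈ Q, β i := by
          rw [← Finset.sum_neg_distrib]
          exact Finset.sum_congr rfl fun i hi => by rw [dif_pos hi]; ring
        have hsub : ∑ i ∈ Qᶜ, (β i * (if h : i ∈ Q then (-1:ℝ) else z ⟨i, h⟩))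
            = ∑ j : ι, β j.1 * z j := by
          rw [Finset.sum_subtype Qᶜ (fun x => Finset.mem_compl)
            (fun i => β i * (if h : i ∈ Q then (-1:ℝ) else z ⟨i, h⟩))]
          exact Finset.sum_congr rfl fun j _ => by rw [dif_neg j.2]
        rw [← hsplit, hQv, hsub]
        rw [hc] at hz2
        linarith
      · intro j hj; exact dif_pos hj
      · funext j; exact dif_neg j.2
  rw [himg]
  -- Step 3: the key sum identity
  have hι : ∑ j : ι, β j.1 = ∑ i ∈ Qᶜ, β i :=
    (Finset.sum_subtype Qᶜ (fun x => Finset.mem_compl) β).symm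
  have hcsum : c + ∑ j : ι, β j.1 = 1 := by
    rw [hι, hc]
    have := Finset.sum_add_sum_compl Q β
    linarith
  -- Step 4: translation
  set W : Set (ι → ℝ) := {w : ι → ℝ | (∀ j, 0 ≤ w j) ∧ ∑ j : ι, β j.1 * w j ≤ 1} with hW
  have htrans : {z : ι → ℝ | (∀ j, -1 ≤ z j) ∧ ∑ j : ι, β j.1 * z j ≤ c}
      = (fun z : ι → ℝ => z + 1) ⁻¹' W := by
    ext z
    simp only [hW, mem_setOf_eq, mem_preimage, Pi.add_apply, Pi.one_apply]
    have hs : ∑ j : ι, β j.1 * (z j + 1) = (∑ j : ι, β j.1 * z j) + ∑ j : ι, β j.1 := by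
      rw [← Finset.sum_add_distrib]
      exact Finset.sum_congr rfl fun j _ => by ring
    rw [hs]
    constructor
    · rintro ⟨h1, h2⟩; exact ⟨fun j => by linarith [h1 j], by linarith⟩
    · rintro ⟨h1, h2⟩; exact ⟨fun j => by linarith [h1 j], by linarith⟩
  rw [htrans, measure_preimage_add_right volume 1 W]
  -- Step 5: rescaling by the diagonal linear map
  set U : Set (ι → ℝ) := {u : ι → ℝ | (∀ j, 0 ≤ u j) ∧ ∑ j : ι, u j ≤ 1} with hU
  have hlin : W = (Matrix.toLin' (Matrix.diagonal fun j : ι => β j.1)) ⁻¹' U := by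
    ext w
    simp only [hW, hU, mem_preimage, mem_setOf_eq, Matrix.toLin'_apply,
      Matrix.mulVec_diagonal]
    constructor
    · rintro ⟨h1, h2⟩
      exact ⟨fun j => mul_nonneg (hβ j.1).le (h1 j), h2⟩
    · rintro ⟨h1, h2⟩
      exact ⟨fun j => nonneg_of_mul_nonneg_right (h1 j) (hβ j.1), h2⟩
  have hdet : LinearMap.det (Matrix.toLin' (Matrix.diagonal fun j : ι => β j.1))
      = ∏ j : ι, β j.1 := by
    rw [LinearMap.det_toLin', Matrix.det_diagonal]
  have hdetne : LinearMap.det (Matrix.toLin' (Matrix.diagonal fun j : ι => β j.1)) ≠ 0 := by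
    rw [hdet]; exact (Finset.prod_pos (fun j _ => hβ j.1)).ne'
  rw [hlin, Measure.addHaar_preimage_linearMap volume hdetne U, hdet]
  -- Step 6: transport to `Fin m` and compute the simplex volume
  have hcard : Fintype.card ι = m := by
    simp [hm, ι, Fintype.card_subtype_compl]
  have e : Fin m ≃ ι := (Fintype.equivFinOfCardEq hcard).symm
  have happ : ∀ (w : Fin m → ℝ) (j : ι),
      (MeasurableEquiv.piCongrLeft (fun _ : ι => ℝ) e) w j = w (e.symm j) := by
    intro w j
    simp [MeasurableEquiv.piCongrLeft, Equiv.piCongrLeft_apply_apply, Equiv.piCongrLeft_apply_eq_cast]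
  have hUmeas : MeasurableSet U := VFD.meas_simplex 1
  have hvolU : volume U = ENNReal.ofReal (1 / m.factorial) := by
    rw [← (volume_measurePreserving_piCongrLeft (fun _ : ι => ℝ) e).measure_preimage
      hUmeas.nullMeasurableSet]
    have hpre : (MeasurableEquiv.piCongrLeft (fun _ : ι => ℝ) e) ⁻¹' U
        = {w : Fin m → ℝ | (∀ i, 0 ≤ w i) ∧ ∑ i, w i ≤ 1} := by
      ext w
      simp only [hU, mem_preimage, mem_setOf_eq, happ]
      constructor
      · rintro ⟨h1, h2⟩
        refine ⟨fun i => by simpa using h1 (e i), ?_⟩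
        rwa [Equiv.sum_comp e.symm w] at h2
      · rintro ⟨h1, h2⟩
        exact ⟨fun j => h1 _, by rwa [Equiv.sum_comp e.symm w]⟩
    rw [hpre, VFD.vol_simplex1 m 1 zero_le_one, one_pow]
  rw [hvolU]
  -- Step 7: final arithmetic
  have hprodpos : (0:ℝ) < ∏ j : ι, β j.1 := Finset.prod_pos fun j _ => hβ j.1
  rw [abs_of_pos (inv_pos.mpr hprodpos), ← ENNReal.ofReal_mul (by positivity)]
  congr 1
  have hprod : ∏ j : ι, (β j.1)⁻¹ = ∏ j ∈ Qᶜ, (β j)⁻¹ :=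
    (Finset.prod_subtype Qᶜ (fun x => Finset.mem_compl) fun i => (β i)⁻¹).symm
  rw [← Finset.prod_inv_distrib, hprod]
  simp only [one_div]
  rw [mul_comm]
end
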